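/- arXiv:2211.03228 — 7 statements merged into one kernel-verified Lean document; each statement's English description precedes it below -/
import Mathlib

section
/- Let ν be an infinite regular cardinal and let Q = [ν]² be the poset of pairs (α,β) with α < β < ν, ordered componentwise: (α,β) ≤ (α',β') iff α ≤ α' and β ≤ β'. Then Cov(Q) = ν. -/
open Cardinal

/-- The chain covering number of a subset `S` of a poset: the least cardinality
of a family of chains whose union is `S`. -/
noncomputable def chainCov {α : Type*} [PartialOrder α] (S : Set α) : Cardinal :=
  sInf {c : Cardinal | ∃ F : Set (Set α),
    (∀ T ∈ F, T ⊆ S ∧ IsChain (· ≤ ·) T) ∧ ⋃₀ F = S ∧ #F = c}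

/-- The poset `[ν]²` of pairs `(α, β)` with `α < β < ν`, ordered componentwise
(as a subposet of the componentwise product). -/
def upperHalf (ν : Cardinal) : Type _ := {p : ν.ord.ToType × ν.ord.ToType // p.1 < p.2}

noncomputable instance (ν : Cardinal) : PartialOrder (upperHalf ν) :=
  Subtype.partialOrder _

/-! Every column `{a} × ν` is a chain, which gives `Cov([ν]²) ≤ ν`. Conversely, a chain can have
an unbounded fibre `{b | (a, b) ∈ T}` over at most one column `a`: a point of `T` in a later column
bounds all earlier fibres. If fewer than `cf ν` chains covered `[ν]²`, then every column would be
covered by fewer than `cf ν` fibres, so one of them would be unbounded; this assigns to each of the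
`ν` columns its own chain, which is absurd. Hence `cf ν ≤ Cov([ν]²)`, and `cf ν = ν` for regular `ν`. -/

section ChainCov

variable {α : Type*} [PartialOrder α]

lemma chainCov_le_mk {S : Set α} {F : Set (Set α)} (hF : ∀ T ∈ F, T ⊆ S ∧ IsChain (· ≤ ·) T)
    (hcov : ⋃₀ F = S) : chainCov S ≤ #F :=
  csInf_le' ⟨F, hF, hcov, rfl⟩

lemma exists_chain_cover_mk_eq_chainCov (S : Set α) :
    ∃ F : Set (Set α), (∀ T ∈ F, T ⊆ S ∧ IsChain (· ≤ ·) T) ∧ ⋃₀ F = S ∧ #F = chainCov S := by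
  refine csInf_mem (s := {c | ∃ F : Set (Set α), (∀ T ∈ F, T ⊆ S ∧ IsChain (· ≤ ·) T) ∧
    ⋃₀ F = S ∧ #F = c}) ⟨_, (fun x => ({x} : Set α)) '' S, ?_, ?_, rfl⟩
  · rintro _ ⟨x, hx, rfl⟩
    exact ⟨Set.singleton_subset_iff.2 hx, Set.subsingleton_singleton.isChain⟩
  · simp [Set.sUnion_image]

end ChainCov

section Fibres

universe u v

variable {A : Type u} {B : Type v}

lemma isChain_setOf_fst_eq [Preorder A] [LinearOrder B] (a : A) :
    IsChain (· ≤ ·) {p : A × B | p.1 = a} := by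
  rintro p (rfl : p.1 = a) q (hq : q.1 = p.1) -
  rcases le_total p.2 q.2 with h | h
  · exact Or.inl ⟨hq.ge, h⟩
  · exact Or.inr ⟨hq.le, h⟩

lemma IsChain.bddAbove_fibre_of_lt [Preorder A] [Preorder B] {T : Set (A × B)}
    (hT : IsChain (· ≤ ·) T) {a a' : A} {b' : B} (ha : a < a') (hb' : (a', b') ∈ T) :
    BddAbove {b | (a, b) ∈ T} := by
  refine ⟨b', fun b hb => ?_⟩
  rcases hT.total hb hb' with h | h
  · exact h.2
  · exact absurd h.1 ha.not_ge

lemma IsChain.eq_of_not_bddAbove_fibre [LinearOrder A] [Preorder B] [Nonempty B]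
    {T : Set (A × B)} (hT : IsChain (· ≤ ·) T) {a a' : A}
    (ha : ¬BddAbove {b | (a, b) ∈ T}) (ha' : ¬BddAbove {b | (a', b) ∈ T}) : a = a' := by
  rcases lt_trichotomy a a' with h | h | h
  · obtain ⟨b', hb'⟩ := nonempty_of_not_bddAbove ha'
    exact absurd (hT.bddAbove_fibre_of_lt h hb') ha
  · exact h
  · obtain ⟨b, hb⟩ := nonempty_of_not_bddAbove ha
    exact absurd (hT.bddAbove_fibre_of_lt h hb) ha'

lemma cof_le_mk_of_isChain_cover [LinearOrder A] [NoMaxOrder A] {ι : Type u}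
    {T : ι → Set (A × A)} (hT : ∀ i, IsChain (· ≤ ·) (T i))
    (hcov : ∀ a b : A, a < b → ∃ i, (a, b) ∈ T i) : Order.cof A ≤ #ι := by
  by_contra! hlt
  have unbounded_fibre : ∀ a : A, ∃ i, ¬BddAbove {b | (a, b) ∈ T i} := by
    intro a
    have hcof : IsCofinal (⋃ i, {b | (a, b) ∈ T i}) := fun x => by
      obtain ⟨b, hb⟩ := exists_gt (max a x)
      exact ⟨b, Set.mem_iUnion.2 (hcov a b (max_lt_iff.1 hb).1), (max_lt_iff.1 hb).2.le⟩
    obtain ⟨i, hi⟩ := isCofinal_of_isCofinal_iUnion hcof hlt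
    exact ⟨i, not_bddAbove_iff_isCofinal.2 hi⟩
  choose f hf using unbounded_fibre
  have hf_inj : Function.Injective f := fun a a' h => by
    have : Nonempty A := ⟨a⟩
    exact (hT (f a')).eq_of_not_bddAbove_fibre (h ▸ hf a) (hf a')
  exact (Order.cof_le_cardinalMk A).not_gt ((mk_le_of_injective hf_inj).trans_lt hlt)

end Fibres

lemma chainCov_upperHalf_le (ν : Cardinal) : chainCov (Set.univ : Set (upperHalf ν)) ≤ ν := by
  let column : ν.ord.ToType → Set (upperHalf ν) := fun a => {p | p.1.1 = a}
  have hcolumn : ∀ T ∈ Set.range column, T ⊆ Set.univ ∧ IsChain (· ≤ ·) T := by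
    rintro _ ⟨a, rfl⟩
    exact ⟨Set.subset_univ _,
      (isChain_setOf_fst_eq (B := ν.ord.ToType) a).preimage_embedding (OrderEmbedding.subtype _)⟩
  calc chainCov (Set.univ : Set (upperHalf ν))
      ≤ #(Set.range column) :=
        chainCov_le_mk hcolumn (Set.eq_univ_of_forall fun p => ⟨column p.1.1, ⟨_, rfl⟩, rfl⟩)
    _ ≤ #ν.ord.ToType := mk_range_le
    _ = ν := by rw [mk_toType, card_ord]

theorem cov_upperHalf_of_regular_general (ν : Cardinal) (hreg : ν.IsRegular) :
    chainCov (Set.univ : Set (upperHalf ν)) = ν := by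
  have : NoMaxOrder ν.ord.ToType := Cardinal.noMaxOrder hreg.aleph0_le
  obtain ⟨F, hF, hcov, hFcard⟩ := exists_chain_cover_mk_eq_chainCov (Set.univ : Set (upperHalf ν))
  refine (chainCov_upperHalf_le ν).antisymm ?_
  rw [← hFcard]
  calc ν = Order.cof ν.ord.ToType := by rw [Ordinal.cof_toType, hreg.cof_ord]
    _ ≤ #F := cof_le_mk_of_isChain_cover (T := fun T : F => Subtype.val '' T.1)
      (fun T => (hF T.1 T.2).2.image (OrderEmbedding.subtype _)) fun a b hab => ?_
  obtain ⟨T, hTF, hT⟩ := hcov.symm ▸ Set.mem_univ (⟨(a, b), hab⟩ : upperHalf ν)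
  exact ⟨⟨T, hTF⟩, _, hT, rfl⟩

theorem cov_upperHalf_of_regular (ν : Cardinal) (hν : ℵ₀ ≤ ν) (hreg : ν.IsRegular) :
    chainCov (Set.univ : Set (upperHalf ν)) = ν :=
  cov_upperHalf_of_regular_general ν hreg
end

section
/- For ν an infinite successor cardinal, the poset [ν]² = {(α,β) : α < β < ν} ordered componentwise cannot be covered by fewer than ν chains. -/
/-!
Successor cardinals are regular, so let `ν` be regular. If fewer than `ν` chains cover
`[ν]²`, then for each `α` the `ν` pairs `(α, β)` with `β > α` are spread over fewer than `ν`
chains, so by regularity one chain `g α` contains `ν` of them. As `g` takes fewer than `ν`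
values, `g α = g α'` for some `α < α'`. Pick `(α', β')` in that chain: every `(α, β)` in the
chain is comparable with it, hence below it, so `β ≤ β'`, leaving fewer than `ν` choices of `β`.
-/

open Cardinal

theorem Cardinal.mk_Iic_ord_toType_lt {c : Cardinal} (hc : ℵ₀ ≤ c) (i : c.ord.ToType) :
    #(Set.Iic i) < c := by
  simpa using mk_Iic_lt i (by simp) (by simpa using hc)

theorem Cardinal.mk_Ioi_ord_toType {c : Cardinal} (hc : ℵ₀ ≤ c) (i : c.ord.ToType) :
    #(Set.Ioi i) = c := by
  have : Infinite c.ord.ToType := Cardinal.infinite_iff.2 (by simpa using hc)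
  rw [← Set.compl_Iic, mk_compl_of_infinite _ (by simpa using mk_Iic_ord_toType_lt hc i),
    mk_ord_toType]

namespace upperHalf

variable {ν : Cardinal}

def fiber (T : Set (upperHalf ν)) (α : ν.ord.ToType) : Set ν.ord.ToType :=
  {β | ∃ h : α < β, (⟨(α, β), h⟩ : upperHalf ν) ∈ T}

theorem iUnion_fiber_eq_Ioi {F : Set (Set (upperHalf ν))} (hF : ⋃₀ F = Set.univ)
    (α : ν.ord.ToType) : ⋃ T : F, fiber T α = Set.Ioi α := by
  ext β
  simp only [Set.mem_iUnion, fiber, Set.mem_Ioi]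
  constructor
  · rintro ⟨-, hαβ, -⟩
    exact hαβ
  · intro hαβ
    obtain ⟨T, hT, hmem⟩ := hF.symm ▸ Set.mem_univ (⟨(α, β), hαβ⟩ : upperHalf ν)
    exact ⟨⟨T, hT⟩, hαβ, hmem⟩

theorem fiber_subset_Iic {T : Set (upperHalf ν)} (hT : IsChain (· ≤ ·) T)
    {α α' β' : ν.ord.ToType} (hα : α < α') (hβ' : β' ∈ fiber T α') :
    fiber T α ⊆ Set.Iic β' := by
  obtain ⟨hα'β', hmem'⟩ := hβ'
  rintro β ⟨hαβ, hmem⟩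
  have hne : (⟨(α, β), hαβ⟩ : upperHalf ν) ≠ ⟨(α', β'), hα'β'⟩ := fun h ↦
    hα.ne (congrArg (fun p : upperHalf ν ↦ p.1.1) h)
  rcases hT hmem hmem' hne with hle | hle
  · exact hle.2
  · exact absurd hle.1 hα.not_ge

theorem exists_le_mk_fiber (hν : ν.IsRegular) {F : Set (Set (upperHalf ν))}
    (hF : ⋃₀ F = Set.univ) (hFν : #F < ν) (α : ν.ord.ToType) :
    ∃ T : F, ν ≤ #(fiber T α) := by
  by_contra! h
  have := (card_iUnion_lt_iff_forall_of_isRegular hν hFν).2 h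
  rw [iUnion_fiber_eq_Ioi hF, mk_Ioi_ord_toType hν.aleph0_le] at this
  exact this.false

end upperHalf

open upperHalf in
theorem Cardinal.IsRegular.le_chainCov_upperHalf {ν : Cardinal} (hν : ν.IsRegular) :
    ν ≤ chainCov (Set.univ : Set (upperHalf ν)) := by
  refine le_csInf ⟨_, Set.range ({·}), fun T ⟨x, hx⟩ ↦ ?_, ?_, rfl⟩ ?_
  · exact ⟨Set.subset_univ T, hx ▸ Set.subsingleton_singleton.isChain⟩
  · exact Set.iUnion_of_singleton _
  rintro _ ⟨F, hF, hcov, rfl⟩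
  by_contra! hFν
  choose g hg using exists_le_mk_fiber hν hcov hFν
  obtain ⟨α, α', hα, hg'⟩ : ∃ α α', α < α' ∧ g α = g α' := by
    obtain ⟨a, b, hab, hne⟩ := Function.not_injective_iff.1 fun hinj : g.Injective ↦
      (mk_le_of_injective hinj).not_gt (by rwa [mk_ord_toType])
    rcases hne.lt_or_gt with h | h
    exacts [⟨a, b, h, hab⟩, ⟨b, a, h, hab.symm⟩]
  obtain ⟨β', hβ'⟩ : (fiber (g α') α').Nonempty :=
    Set.nonempty_coe_sort.1 (mk_ne_zero_iff.1 (hν.pos.trans_le (hg α')).ne')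
  have := (hg α).trans (mk_le_mk_of_subset
    (fiber_subset_Iic (hF _ (g α).2).2 hα (hg' ▸ hβ')))
  exact this.not_gt (mk_Iic_ord_toType_lt hν.aleph0_le β')

theorem cov_upperHalf_of_succ (ν κ : Cardinal) (hν : ℵ₀ ≤ ν) (hsucc : ν = Order.succ κ) :
    ν ≤ chainCov (Set.univ : Set (upperHalf ν)) := by
  have hκ : ℵ₀ ≤ κ := not_lt.1 fun h ↦ (isSuccLimit_aleph0.succ_lt h).not_ge (hsucc ▸ hν)
  subst hsucc
  exact (isRegular_succ hκ).le_chainCov_upperHalf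
end

section
/- Let P be a poset and x < y two elements in the same connected component of the incomparability graph Inc(P). Let x = x₀, x₁, ..., x_{n+1} = y be a shortest path in Inc(P) from x to y. Then x_i < x_j whenever i + 2 ≤ j. -/
open Cardinal

/-- The incomparability graph of a poset: edges are the incomparable pairs. -/
def incGraph (α : Type*) [PartialOrder α] : SimpleGraph α where
  Adj x y := ¬ x ≤ y ∧ ¬ y ≤ x
  symm := ⟨fun _ _ h => ⟨h.2, h.1⟩⟩
  loopless := ⟨fun _ h => h.1 le_rfl⟩

/-!
Minimality of the path forbids shortcuts, so vertices at least two steps apart are distinct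
and not adjacent in `Inc(P)`, i.e. comparable. Consecutive vertices are incomparable, so a
comparison in the wrong direction next to one in the right direction would make two
consecutive vertices comparable; starting from `x₀ < x_{n+1}` this orients every comparison
upwards, first `x₀ < x_j` by downward induction on `j`, then `x_i < x_j` by induction on `i`.
-/

namespace SimpleGraph.Walk

variable {V : Type*} {G : SimpleGraph V} {u v : V}

/-- Splicing `q` into a shortest walk in place of its segment from index `i` to `j`
gives a walk of length `p.length - (j - i) + q.length`. -/
lemma sub_le_length_of_forall_length_le {p : G.Walk u v}
    (hp : ∀ q : G.Walk u v, p.length ≤ q.length) {i j : ℕ} (hj : j ≤ p.length)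
    (q : G.Walk (p.getVert i) (p.getVert j)) : j - i ≤ q.length := by
  have h := hp ((p.take i).append (q.append (p.drop j)))
  simp only [length_append, take_length, drop_length] at h
  omega

lemma getVert_ne_of_forall_length_le {p : G.Walk u v}
    (hp : ∀ q : G.Walk u v, p.length ≤ q.length) {i j : ℕ} (hij : i < j)
    (hj : j ≤ p.length) : p.getVert i ≠ p.getVert j := by
  intro h
  have := sub_le_length_of_forall_length_le hp hj (nil.copy rfl h)
  simp only [length_copy, length_nil] at this
  omega

lemma not_adj_getVert_of_forall_length_le {p : G.Walk u v}
    (hp : ∀ q : G.Walk u v, p.length ≤ q.length) {i j : ℕ} (hij : i + 2 ≤ j)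
    (hj : j ≤ p.length) : ¬ G.Adj (p.getVert i) (p.getVert j) := fun hadj => by
  have := sub_le_length_of_forall_length_le hp hj hadj.toWalk
  simp only [length_cons, length_nil] at this
  omega

end SimpleGraph.Walk

lemma lt_or_gt_of_not_incGraph_adj {α : Type*} [PartialOrder α] {a b : α} (hab : a ≠ b)
    (h : ¬ (incGraph α).Adj a b) : a < b ∨ b < a := by
  simp only [incGraph, not_and_or, not_not] at h
  exact h.imp hab.lt_of_le hab.lt_of_le'

section IncomparableSteps

variable {α : Type*} [PartialOrder α] {f : ℕ → α} {n : ℕ}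

lemma zero_lt_of_incomparable_steps (hstep : ∀ k < n, ¬ f k ≤ f (k + 1))
    (hcomp : ∀ i j, i + 2 ≤ j → j ≤ n → f i < f j ∨ f j < f i) (hlast : f 0 < f n)
    {j : ℕ} (hj2 : 2 ≤ j) (hjn : j ≤ n) : f 0 < f j := by
  induction hjn using Nat.decreasingInduction with
  | self => exact hlast
  | of_succ j hjn ih =>
    refine (hcomp 0 j hj2 hjn.le).resolve_right fun hj0 => ?_
    exact hstep j hjn (hj0.trans (ih (by omega))).le

lemma lt_of_incomparable_steps (hstep : ∀ k < n, ¬ f k ≤ f (k + 1))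
    (hcomp : ∀ i j, i + 2 ≤ j → j ≤ n → f i < f j ∨ f j < f i) (hlast : f 0 < f n) :
    ∀ i j, i + 2 ≤ j → j ≤ n → f i < f j := by
  intro i
  induction i with
  | zero => exact fun j hj2 hjn => zero_lt_of_incomparable_steps hstep hcomp hlast hj2 hjn
  | succ i ih =>
    intro j hij hjn
    refine (hcomp (i + 1) j hij hjn).resolve_right fun hji => ?_
    exact hstep i (by omega) ((ih j (by omega) hjn).trans hji).le

end IncomparableSteps

theorem shortest_path_increasing {α : Type u} [PartialOrder α] {x y : α}
    (hxy : x < y) (p : (incGraph α).Walk x y)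
    (hshort : ∀ q : (incGraph α).Walk x y, p.length ≤ q.length) :
    ∀ i j : ℕ, i + 2 ≤ j → j ≤ p.length → p.getVert i < p.getVert j := by
  refine lt_of_incomparable_steps (fun k hk => (p.adj_getVert_succ hk).1) (fun i j hij hj => ?_)
    (by simpa using hxy)
  exact lt_or_gt_of_not_incGraph_adj (p.getVert_ne_of_forall_length_le hshort (by omega) hj)
    (p.not_adj_getVert_of_forall_length_le hshort hij hj)
end

section
/- Let P be a poset, x < y in P, and let x = x₀, x₁, ..., x_{n+1} = y be a shortest path in the incomparability graph Inc(P) joining x to y. Then the interval [x,y] = {z : x ≤ z ≤ y} is contained in the union over i = 1,...,n of the sets Inc_{x_i}(P) of elements incomparable to x_i. -/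
open Cardinal

/-!
Follow the walk from `x` to `y`. If `z < y`, the walk starts in the down-set of `z` (at `x`) and
leaves it (at `y`), so some step goes from `p.getVert i ≤ z` to `p.getVert (i + 1) ≰ z`; as these
two vertices are incomparable, `z ≤ p.getVert (i + 1)` is impossible too, and that vertex is not `y`
because `z ≤ y`. If `z = y`, the penultimate vertex is adjacent, i.e. incomparable, to `y`; it is
interior because `x` and `y` are comparable, so the walk has length at least two.
-/

namespace SimpleGraph.Walk

variable {V : Type*} {G : SimpleGraph V}

theorem exists_boundary_getVert {u v : V} (p : G.Walk u v) (S : Set V) (uS : u ∈ S)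
    (vS : v ∉ S) : ∃ i < p.length, p.getVert i ∈ S ∧ p.getVert (i + 1) ∉ S := by
  obtain ⟨d, hd, hfst, hsnd⟩ := p.exists_boundary_dart S uS vS
  obtain ⟨i, hi, rfl⟩ := List.getElem_of_mem hd
  rw [darts_getElem_eq_getVert] at hfst hsnd
  exact ⟨i, p.length_darts ▸ hi, hfst, hsnd⟩

end SimpleGraph.Walk

namespace incGraph

variable {α : Type*} [PartialOrder α] {x y : α}

theorem two_le_length_walk_of_lt (hxy : x < y) (p : (incGraph α).Walk x y) :
    2 ≤ p.length := by
  have h₀ : p.length ≠ 0 := fun h => hxy.ne (SimpleGraph.Walk.eq_of_length_eq_zero h)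
  have h₁ : p.length ≠ 1 := fun h => (SimpleGraph.Walk.adj_of_length_eq_one h).1 hxy.le
  omega

theorem exists_interior_adj_of_lt (p : (incGraph α).Walk x y) {z : α} (hxz : x ≤ z)
    (hzy : z < y) :
    ∃ i, 1 ≤ i ∧ i + 1 ≤ p.length ∧ (incGraph α).Adj z (p.getVert i) := by
  obtain ⟨i, hi, hle, hnle⟩ :=
    p.exists_boundary_getVert {w | w ≤ z} hxz (not_le_of_gt hzy)
  have hge : ¬ z ≤ p.getVert (i + 1) := fun h => (p.adj_getVert_succ hi).1 (le_trans hle h)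
  have hne : i + 1 ≠ p.length := by
    rintro h
    rw [h, p.getVert_length] at hge
    exact hge hzy.le
  exact ⟨i + 1, by omega, by omega, hge, hnle⟩

theorem exists_interior_adj_right (hxy : x < y) (p : (incGraph α).Walk x y) :
    ∃ i, 1 ≤ i ∧ i + 1 ≤ p.length ∧ (incGraph α).Adj y (p.getVert i) := by
  have hlen := two_le_length_walk_of_lt hxy p
  have hp : ¬ p.Nil := fun h => by simp [h.length_eq_zero] at hlen
  exact ⟨p.length - 1, by omega, by omega, (p.adj_penultimate hp).symm⟩

end incGraph

theorem interval_subset_incomparables_general {α : Type u} [PartialOrder α] {x y : α}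
    (hxy : x < y) (p : (incGraph α).Walk x y) :
    ∀ z ∈ Set.Icc x y, ∃ i : ℕ, 1 ≤ i ∧ i + 1 ≤ p.length ∧
      ¬ z ≤ p.getVert i ∧ ¬ p.getVert i ≤ z := by
  rintro z ⟨hxz, hzy⟩
  obtain rfl | hzy := hzy.eq_or_lt
  · exact incGraph.exists_interior_adj_right hxy p
  · exact incGraph.exists_interior_adj_of_lt p hxz hzy

theorem interval_subset_incomparables {α : Type u} [PartialOrder α] {x y : α}
    (hxy : x < y) (p : (incGraph α).Walk x y)
    (hshort : ∀ q : (incGraph α).Walk x y, p.length ≤ q.length) :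
    ∀ z ∈ Set.Icc x y, ∃ i : ℕ, 1 ≤ i ∧ i + 1 ≤ p.length ∧
      ¬ z ≤ p.getVert i ∧ ¬ p.getVert i ≤ z :=
  interval_subset_incomparables_general hxy p
end

section
/- Let ν be an uncountable cardinal and P a poset with no infinite antichain such that Cov(P) ≥ ν. Then there is a finite antichain L of P (possibly empty) such that the induced subposet Q on the set of elements incomparable to every member of L satisfies Cov(Q) ≥ ν and Cov(Q restricted to Inc_x(Q)) < ν for every x ∈ Q. -/
open Cardinal

/-- The set of elements of a poset incomparable to `a`. -/
def incSet {α : Type*} [PartialOrder α] (a : α) : Set α := {y | ¬ a ≤ y ∧ ¬ y ≤ a}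

/-!
Write `Q_L` (`commonIncSet L`) for the elements incomparable to all of `L`. If no antichain `L`
works, every admissible `L` has some `x ∈ Q_L` with `Cov(Q_L ∩ Inc x) ≥ ν`, and `Q_L ∩ Inc x` is
`Q_{L ∪ {x}}`, so `L ∪ {x}` is admissible again. Starting from `L = ∅` and adjoining such elements
forever produces pairwise incomparable elements `a₀, a₁, …`: an infinite antichain. Nothing about
`Cov` is used beyond its being a property of subsets.
-/

section

variable {α : Type*} [PartialOrder α]

def commonIncSet (L : Finset α) : Set α := {y | ∀ a ∈ L, y ∈ incSet a}

lemma mem_incSet_comm {a b : α} : b ∈ incSet a ↔ a ∈ incSet b := by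
  simp only [incSet, Set.mem_ofPred_eq, and_comm]

lemma notMem_incSet_self (a : α) : a ∉ incSet a := fun h => h.1 le_rfl

@[simp]
lemma commonIncSet_empty : commonIncSet (∅ : Finset α) = Set.univ := by
  simp [commonIncSet]

lemma commonIncSet_insert [DecidableEq α] (b : α) (L : Finset α) :
    commonIncSet (insert b L) = commonIncSet L ∩ incSet b := by
  ext y
  simp [commonIncSet, and_comm]

lemma IsAntichain.insert_of_mem_commonIncSet [DecidableEq α] {L : Finset α}
    (hL : IsAntichain (· ≤ ·) (L : Set α)) {b : α} (hb : b ∈ commonIncSet L) :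
    IsAntichain (· ≤ ·) ((insert b L : Finset α) : Set α) := by
  rw [Finset.coe_insert]
  exact hL.insert (fun a ha _ => (hb a ha).1) (fun a ha _ => (hb a ha).2)

lemma isAntichain_range_and_infinite {f : ℕ → α}
    (hf : ∀ m n, m < n → f n ∈ incSet (f m)) :
    IsAntichain (· ≤ ·) (Set.range f) ∧ (Set.range f).Infinite := by
  have hinc : ∀ m n, m ≠ n → f n ∈ incSet (f m) := by
    intro m n hmn
    rcases hmn.lt_or_gt with h | h
    · exact hf m n h
    · exact mem_incSet_comm.mp (hf n m h)
  refine ⟨?_, Set.infinite_range_of_injective fun m n hmn => ?_⟩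
  · rintro _ ⟨m, rfl⟩ _ ⟨n, rfl⟩ hne
    exact (hinc m n fun h => hne (congrArg f h)).1
  · by_contra hne
    exact notMem_incSet_self (f m) (hmn ▸ hinc m n hne)

lemma exists_infinite_antichain_of_forall_exists_insert [DecidableEq α] {p : Finset α → Prop}
    (h0 : p ∅)
    (hstep : ∀ L, p L → ∃ b ∈ commonIncSet L, p (insert b L)) :
    ∃ A : Set α, IsAntichain (· ≤ ·) A ∧ A.Infinite := by
  choose b hb hpb using fun L : {L // p L} => hstep L.1 L.2
  let F : ℕ → {L // p L} := fun n => (fun L => ⟨insert (b L) L.1, hpb L⟩)^[n] ⟨∅, h0⟩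
  have hF_succ : ∀ n, (F (n + 1)).1 = insert (b (F n)) (F n).1 := fun n =>
    congrArg Subtype.val (Function.iterate_succ_apply' _ n _)
  have hF_mono : Monotone fun n => (F n).1 :=
    monotone_nat_of_le_succ fun n => (hF_succ n).symm ▸ Finset.subset_insert _ _
  refine ⟨_, isAntichain_range_and_infinite fun m n hmn => hb (F n) _ ?_⟩
  refine hF_mono (Nat.succ_le_of_lt hmn) ?_
  simp only [hF_succ, Finset.mem_insert_self]

theorem exists_antichain_reduction_of_pred
    (hfa : ∀ A : Set α, IsAntichain (· ≤ ·) A → A.Finite)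
    (P : Set α → Prop) (huniv : P Set.univ) :
    ∃ L : Finset α, IsAntichain (· ≤ ·) (L : Set α) ∧ P (commonIncSet L) ∧
      ∀ x ∈ commonIncSet L, ¬ P (commonIncSet L ∩ incSet x) := by
  classical
  by_contra! h
  obtain ⟨A, hA, hAinf⟩ := exists_infinite_antichain_of_forall_exists_insert
    (p := fun L => IsAntichain (· ≤ ·) (L : Set α) ∧ P (commonIncSet L))
    ⟨by simp, by simpa using huniv⟩ fun L ⟨hL, hPL⟩ => by
      obtain ⟨x, hx, hPx⟩ := h L hL hPL
      exact ⟨x, hx, IsAntichain.insert_of_mem_commonIncSet hL hx,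
        (commonIncSet_insert x L).symm ▸ hPx⟩
  exact hAinf (hfa A hA)

end

theorem exists_antichain_reduction_general {α : Type u} [PartialOrder α] (ν : Cardinal)
    (hfa : ∀ A : Set α, IsAntichain (· ≤ ·) A → A.Finite)
    (hcov : ν ≤ chainCov (Set.univ : Set α)) :
    ∃ L : Finset α, IsAntichain (· ≤ ·) (L : Set α) ∧
      (ν ≤ chainCov {x | ∀ a ∈ L, x ∈ incSet a}) ∧
      ∀ x ∈ {x | ∀ a ∈ L, x ∈ incSet a},
        chainCov ({y | ∀ a ∈ L, y ∈ incSet a} ∩ incSet x) < ν := by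
  obtain ⟨L, hL, hcovL, hsmall⟩ :=
    exists_antichain_reduction_of_pred hfa (fun S => ν ≤ chainCov S) hcov
  exact ⟨L, hL, hcovL, fun x hx => not_le.mp (hsmall x hx)⟩

theorem exists_antichain_reduction {α : Type u} [PartialOrder α] (ν : Cardinal)
    (hν : ℵ₀ < ν)
    (hfa : ∀ A : Set α, IsAntichain (· ≤ ·) A → A.Finite)
    (hcov : ν ≤ chainCov (Set.univ : Set α)) :
    ∃ L : Finset α, IsAntichain (· ≤ ·) (L : Set α) ∧
      (ν ≤ chainCov {x | ∀ a ∈ L, x ∈ incSet a}) ∧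
      ∀ x ∈ {x | ∀ a ∈ L, x ∈ incSet a},
        chainCov ({y | ∀ a ∈ L, y ∈ incSet a} ∩ incSet x) < ν :=
  exists_antichain_reduction_general ν hfa hcov
end

section
/- Let ν be an uncountable cardinal with cofinality θ and let P be a poset such that Cov(P) ≥ ν and Cov(P \ ↑x) < ν for every x ∈ P. Then every subset X of P with |X| < θ is bounded above in P. -/
open Cardinal

lemma chainCov_mem {α : Type*} [PartialOrder α] (S : Set α) :
    ∃ F : Set (Set α),
      (∀ T ∈ F, T ⊆ S ∧ IsChain (· ≤ ·) T) ∧ ⋃₀ F = S ∧ #F = chainCov S := by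
  have hne : {c : Cardinal | ∃ F : Set (Set α),
      (∀ T ∈ F, T ⊆ S ∧ IsChain (· ≤ ·) T) ∧ ⋃₀ F = S ∧ #F = c}.Nonempty := by
    refine ⟨_, (fun a : α => ({a} : Set α)) '' S, ?_, ?_, rfl⟩
    · rintro T ⟨a, ha, rfl⟩
      exact ⟨Set.singleton_subset_iff.mpr ha, Set.Subsingleton.isChain (by simp)⟩
    · ext b
      simp [Set.mem_sUnion]
  exact csInf_mem hne

lemma chainCov_le {α : Type*} [PartialOrder α] {S : Set α} (F : Set (Set α))
    (h1 : ∀ T ∈ F, T ⊆ S ∧ IsChain (· ≤ ·) T) (h2 : ⋃₀ F = S) :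
    chainCov S ≤ #F :=
  csInf_le' ⟨F, h1, h2, rfl⟩

theorem small_sets_bounded {α : Type u} [PartialOrder α] (ν : Cardinal)
    (hν : ℵ₀ < ν)
    (hcov : ν ≤ chainCov (Set.univ : Set α))
    (hup : ∀ x : α, chainCov (Set.Ici x)ᶜ < ν) :
    ∀ X : Set α, #X < ν.ord.cof → ∃ b : α, ∀ x ∈ X, x ≤ b := by
  intro X hX
  by_contra h
  push_neg at h
  -- for each x, pick a chain cover of (Ici x)ᶜ
  choose F hF1 hF2 hF3 using fun x : α => chainCov_mem (Set.Ici x)ᶜ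
  set G : Set (Set α) := ⋃ x : X, F x with hG
  have hGcov : ⋃₀ G = (Set.univ : Set α) := by
    ext b
    simp only [Set.mem_univ, iff_true, Set.mem_sUnion]
    obtain ⟨x, hx, hxb⟩ := h b
    have hb : b ∈ (Set.Ici (x : α))ᶜ := by simpa [Set.mem_Ici] using hxb
    rw [← hF2 x] at hb
    obtain ⟨T, hT, hbT⟩ := hb
    exact ⟨T, Set.mem_iUnion.mpr ⟨⟨x, hx⟩, hT⟩, hbT⟩
  have hGchain : ∀ T ∈ G, T ⊆ (Set.univ : Set α) ∧ IsChain (· ≤ ·) T := by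
    rintro T hT
    obtain ⟨⟨x, hx⟩, hTx⟩ := Set.mem_iUnion.mp hT
    exact ⟨Set.subset_univ _, (hF1 x T hTx).2⟩
  have hsmall : #G < ν := by
    have h1 : #G ≤ #X * ⨆ x : X, #(F x) := by
      simpa [hG] using Cardinal.mk_iUnion_le (fun x : X => F (x : α))
    have hsup : (⨆ x : X, #(F (x : α))) < ν :=
      Ordinal.iSup_lt hX (fun x => by rw [hF3]; exact hup x)
    have hXν : #X < ν := hX.trans_le (Ordinal.cof_ord_le ν)
    exact h1.trans_lt (Cardinal.mul_lt_of_lt hν.le hXν hsup)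
  have := chainCov_le G hGchain hGcov
  exact absurd (hcov.trans this) (not_le.mpr hsmall)
end

section
/- Let λ be an uncountable regular cardinal and P a poset with no infinite antichain. Then the collection of unbounded ideals of P that contain a cofinal chain of order type λ, ordered by inclusion, has no infinite antichain. -/
open Cardinal

/-- `J` is an ideal: nonempty, downward closed and up-directed. -/
def IsIdealSet {α : Type*} [PartialOrder α] (J : Set α) : Prop :=
  J.Nonempty ∧ IsLowerSet J ∧ DirectedOn (· ≤ ·) J

/-- `J` is unbounded: no single element majorizes it. -/
def IsUnboundedSet {α : Type*} [PartialOrder α] (J : Set α) : Prop :=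
  ¬ ∃ b, ∀ x ∈ J, x ≤ b

/-- `J` contains a chain of order type `λ` cofinal in `J`. -/
def HasCofinalChainOfType {α : Type*} [PartialOrder α] (J : Set α) (l : Cardinal) : Prop :=
  ∃ C : Set α, C ⊆ J ∧ IsChain (· ≤ ·) C ∧ (∀ y ∈ J, ∃ c ∈ C, y ≤ c) ∧
    Nonempty (l.ord.ToType ≃o C)

/-!
From an infinite antichain of such ideals pick distinct `J₀, J₁, …`. Since `Jₙ` has a cofinal
chain of uncountable regular type, the countably many witnesses of `Jₙ ⊈ Jₘ` (`m ≠ n`) have a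
common bound `bₙ ∈ Jₙ`. As the `Jₘ` are lower sets, `bₙ ∉ Jₘ` for `m ≠ n`, so the `bₙ` form an
infinite antichain of `α`.
-/

universe u v

section

variable {α : Type u} [PartialOrder α]

theorem Order.bddAbove_of_mk_lt_cof {β : Type*} [LinearOrder β] {s : Set β}
    (hs : #s < Order.cof β) : BddAbove s := by
  by_contra hunbdd
  have hcofinal : IsCofinal s := fun x ↦ by
    obtain ⟨y, hy, hxy⟩ := not_bddAbove_iff.mp hunbdd x
    exact ⟨y, hy, hxy.le⟩
  exact (Order.cof_le hcofinal).not_gt hs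

theorem HasCofinalChainOfType.exists_upperBound {J : Set α} {l : Cardinal.{v}}
    (hJ : HasCofinalChainOfType J l) (hreg : l.IsRegular) {s : Set α} (hsJ : s ⊆ J)
    (hs : lift.{v} #s < lift.{u} l) : ∃ b ∈ J, ∀ x ∈ s, x ≤ b := by
  obtain ⟨C, hCJ, -, hcof, ⟨e⟩⟩ := hJ
  choose c hcC hxc using fun x : s ↦ hcof x (hsJ x.2)
  set t : Set l.ord.ToType := Set.range fun x : s ↦ e.symm ⟨c x, hcC x⟩
  have ht : #t < Order.cof l.ord.ToType := by
    rw [Ordinal.cof_toType, hreg.cof_ord, ← lift_lt.{v, u}]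
    exact mk_range_le_lift.trans_lt hs
  obtain ⟨a, ha⟩ := Order.bddAbove_of_mk_lt_cof ht
  refine ⟨e a, hCJ (e a).2, fun x hx ↦ (hxc ⟨x, hx⟩).trans ?_⟩
  exact Subtype.coe_le_coe.mpr (by simpa using e.monotone (ha ⟨⟨x, hx⟩, rfl⟩))

theorem exists_mem_iff_eq_of_pairwise_not_subset {ι : Type*} [Countable ι] {J : ι → Set α}
    (hne : ∀ i, (J i).Nonempty) (hlower : ∀ i, IsLowerSet (J i))
    (hJ : Pairwise fun i j ↦ ¬ J i ⊆ J j)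
    (hbdd : ∀ i, ∀ s ⊆ J i, s.Countable → ∃ b ∈ J i, ∀ x ∈ s, x ≤ b) :
    ∃ b : ι → α, ∀ i j, b i ∈ J j ↔ i = j := by
  have hwit : ∀ i j, ∃ w ∈ J i, i ≠ j → w ∉ J j := fun i j ↦ by
    by_cases hij : i = j
    · obtain ⟨w, hw⟩ := hne i
      exact ⟨w, hw, fun h ↦ (h hij).elim⟩
    · obtain ⟨w, hwi, hwj⟩ := Set.not_subset.mp (hJ hij)
      exact ⟨w, hwi, fun _ ↦ hwj⟩
  choose w hwJ hwnot using hwit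
  choose b hbJ hbw using fun i ↦
    hbdd i (Set.range (w i)) (Set.range_subset_iff.mpr (hwJ i)) (Set.countable_range _)
  refine ⟨b, fun i j ↦ ⟨fun hbj ↦ ?_, fun hij ↦ hij ▸ hbJ i⟩⟩
  by_contra hij
  exact hwnot i j hij (hlower j (hbw i _ ⟨j, rfl⟩) hbj)

theorem isAntichain_range_of_mem_iff_eq {ι : Type*} {J : ι → Set α} {b : ι → α}
    (hlower : ∀ i, IsLowerSet (J i)) (hb : ∀ i j, b i ∈ J j ↔ i = j) :
    Function.Injective b ∧ IsAntichain (· ≤ ·) (Set.range b) := by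
  refine ⟨fun i j hij ↦ (hb i j).mp (hij ▸ (hb j j).mpr rfl), ?_⟩
  rintro _ ⟨i, rfl⟩ _ ⟨j, rfl⟩ hne hle
  exact hne (congrArg b ((hb i j).mp (hlower j hle ((hb j j).mpr rfl))))

end

theorem ideals_no_infinite_antichain {α : Type u} [PartialOrder α] (l : Cardinal)
    (hl : ℵ₀ < l) (hreg : l.IsRegular)
    (hfa : ∀ A : Set α, IsAntichain (· ≤ ·) A → A.Finite) :
    ∀ 𝒜 : Set (Set α),
      (∀ J ∈ 𝒜, IsIdealSet J ∧ IsUnboundedSet J ∧ HasCofinalChainOfType J l) →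
      IsAntichain (· ⊆ ·) 𝒜 → 𝒜.Finite := by
  intro 𝒜 h𝒜 hanti
  by_contra hinf
  set f := (Set.not_finite.mp hinf).natEmbedding
  have hideal (n : ℕ) := h𝒜 _ (f n).2
  have hJ : Pairwise fun m n ↦ ¬ (f m : Set α) ⊆ f n := fun m n hmn ↦
    hanti (f m).2 (f n).2 fun h ↦ hmn (f.injective (Subtype.ext h))
  have hbdd (n : ℕ) (s : Set α) (hs : s ⊆ f n) (hsc : s.Countable) :
      ∃ b ∈ (f n : Set α), ∀ x ∈ s, x ≤ b :=
    (hideal n).2.2.exists_upperBound hreg hs <|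
      (lift_le.mpr hsc.le_aleph0).trans_lt (by simpa using hl)
  obtain ⟨b, hb⟩ := exists_mem_iff_eq_of_pairwise_not_subset (fun n ↦ (hideal n).1.1)
    (fun n ↦ (hideal n).1.2.1) hJ hbdd
  obtain ⟨hinj, hbanti⟩ := isAntichain_range_of_mem_iff_eq (fun n ↦ (hideal n).1.2.1) hb
  exact Set.infinite_range_of_injective hinj (hfa _ hbanti)
end
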